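/- Let a, b, k > 0, y > 0 and z > 0, and for ε > 0 define h(y,z,ε) = (yz/k + (y − z(a+y²))/(2ε) + ky²/(2ε²)) · (1 − √(1 + 4ε²ky(εby + z(2εz(a+y²) − y(ky + ε(2+a+y²))))/(ky(ky+ε) + εz(2εy − k(a+y²)))²)). Then, as ε → 0 from the right, h(y,z,ε) tends to h₀(y,z) = yz/k, and (h(y,z,ε) − h₀(y,z))/ε tends to h₁(y,z) = (z−b)/k² + z(a+y²)(y−z)/(k²y). -/

import Mathlib

/-!
Write `h(ε) = Q(ε) / ε² · (1 - √(1 + ε² w(ε)))`, where `Q` is a quadratic polynomial in `ε` and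
`w` is a rational function whose denominator equals `k²y² ≠ 0` at `ε = 0`. Since
`|1 - √(1 + u) + u / 2| ≤ u² / 2`, we get `h(ε) = -Q(ε) w(ε) / 2 + O(ε²)`, so `h₀` and `h₁` are the
value and the derivative at `0` of the rational function `-Q w / 2`.
-/

open Filter Topology

/-- Explicit SIM approximation of the 3D Sel'kov slow subsystem obtained by the CSP method
with one iteration. -/
noncomputable def SelkovCsp (a b k : ℝ) (y z ε : ℝ) : ℝ :=
  (y * z / k + (y - z * (a + y ^ 2)) / (2 * ε) + k * y ^ 2 / (2 * ε ^ 2)) *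
    (1 - Real.sqrt (1 + 4 * ε ^ 2 * k * y *
      (ε * b * y + z * (2 * ε * z * (a + y ^ 2) - y * (k * y + ε * (2 + a + y ^ 2)))) /
      (k * y * (k * y + ε) + ε * z * (2 * ε * y - k * (a + y ^ 2))) ^ 2))

theorem abs_one_add_half_sub_sqrt_one_add_le (u : ℝ) :
    |1 + u / 2 - √(1 + u)| ≤ u ^ 2 / 2 := by
  rcases le_or_gt (-1) u with hu | hu
  · have hsq := Real.sq_sqrt (by linarith : (0 : ℝ) ≤ 1 + u)
    have hnonneg := Real.sqrt_nonneg (1 + u)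
    rw [abs_le]
    constructor <;> nlinarith
  · rw [Real.sqrt_eq_zero_of_nonpos (by linarith), abs_le]
    constructor <;> nlinarith

theorem tendsto_of_tendsto_sub_div_nhdsNE {f : ℝ → ℝ} {c L : ℝ}
    (h : Tendsto (fun ε => (f ε - c) / ε) (𝓝[≠] 0) (𝓝 L)) : Tendsto f (𝓝[≠] 0) (𝓝 c) := by
  have hε : Tendsto (fun ε : ℝ => ε) (𝓝[≠] 0) (𝓝 0) := nhdsWithin_le_nhds
  have hlim := (hε.mul h).const_add c
  rw [zero_mul, add_zero] at hlim
  refine hlim.congr' (eventually_nhdsWithin_of_forall fun ε (hε : ε ≠ 0) => ?_)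
  field_simp
  ring

theorem tendsto_sub_div_of_div_sq_mul_one_sub_sqrt {Q w : ℝ → ℝ} {L : ℝ}
    (hw : ContinuousAt w 0) (hd : HasDerivAt (fun ε => -(Q ε * w ε) / 2) L 0) :
    Tendsto (fun ε => (Q ε / ε ^ 2 * (1 - √(1 + ε ^ 2 * w ε)) - -(Q 0 * w 0) / 2) / ε)
      (𝓝[≠] 0) (𝓝 L) := by
  set φ : ℝ → ℝ := fun u => 1 + u / 2 - √(1 + u)
  have hsplit : ∀ ε ≠ (0 : ℝ),
      (Q ε / ε ^ 2 * (1 - √(1 + ε ^ 2 * w ε)) - -(Q 0 * w 0) / 2) / ε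
        = ε⁻¹ * (-(Q ε * w ε) / 2 - -(Q 0 * w 0) / 2) + Q ε * φ (ε ^ 2 * w ε) / ε ^ 3 := by
    intro ε hε
    simp only [φ]
    field_simp
    ring
  have hslope : Tendsto (fun ε : ℝ => ε⁻¹ * (-(Q ε * w ε) / 2 - -(Q 0 * w 0) / 2)) (𝓝[≠] 0)
      (𝓝 L) := by
    simpa using hd.tendsto_slope_zero
  have hbound : ∀ ε ≠ (0 : ℝ),
      ‖Q ε * φ (ε ^ 2 * w ε) / ε ^ 3‖ ≤ |ε| * |-(Q ε * w ε) / 2| * |w ε| := by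
    intro ε hε
    have hφ := abs_one_add_half_sub_sqrt_one_add_le (ε ^ 2 * w ε)
    have hε3 : 0 < |ε| ^ 3 := pow_pos (abs_pos.2 hε) 3
    rw [Real.norm_eq_abs, abs_div, abs_mul, abs_pow, div_le_iff₀ hε3, abs_div, abs_neg, abs_mul,
      abs_two]
    calc |Q ε| * |φ (ε ^ 2 * w ε)| ≤ |Q ε| * ((ε ^ 2 * w ε) ^ 2 / 2) :=
          mul_le_mul_of_nonneg_left hφ (abs_nonneg _)
      _ = |ε| * (|Q ε| * |w ε| / 2) * |w ε| * |ε| ^ 3 := by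
          rw [show (ε ^ 2 * w ε) ^ 2 = (|ε| ^ 2) ^ 2 * |w ε| ^ 2 by rw [sq_abs, sq_abs]; ring]
          ring
  have hrem : Tendsto (fun ε : ℝ => Q ε * φ (ε ^ 2 * w ε) / ε ^ 3) (𝓝[≠] 0) (𝓝 0) := by
    refine squeeze_zero_norm' (eventually_nhdsWithin_of_forall hbound) ?_
    have hcont : ContinuousAt (fun ε : ℝ => |ε| * |-(Q ε * w ε) / 2| * |w ε|) 0 := by
      have := hd.continuousAt
      fun_prop
    simpa using hcont.tendsto.mono_left nhdsWithin_le_nhds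
  have hsum := (hslope.add hrem).congr'
    (eventually_nhdsWithin_of_forall fun ε hε => (hsplit ε hε).symm)
  rwa [add_zero] at hsum

namespace SelkovCsp

variable (a b k y z : ℝ)

noncomputable def prefactor (ε : ℝ) : ℝ :=
  y * z / k * ε ^ 2 + (y - z * (a + y ^ 2)) / 2 * ε + k * y ^ 2 / 2

def numer (ε : ℝ) : ℝ :=
  ε * b * y + z * (2 * ε * z * (a + y ^ 2) - y * (k * y + ε * (2 + a + y ^ 2)))

def denom (ε : ℝ) : ℝ := k * y * (k * y + ε) + ε * z * (2 * ε * y - k * (a + y ^ 2))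

noncomputable def radicandCoeff (ε : ℝ) : ℝ := 4 * k * y * numer a b k y z ε / denom a k y z ε ^ 2

theorem eq_prefactor_div_sq_mul (hk : k ≠ 0) {ε : ℝ} (hε : ε ≠ 0) :
    SelkovCsp a b k y z ε =
      prefactor a k y z ε / ε ^ 2 * (1 - √(1 + ε ^ 2 * radicandCoeff a b k y z ε)) := by
  unfold SelkovCsp prefactor radicandCoeff numer denom
  congr 1
  · field_simp
  · ring_nf

theorem hasDerivAt_prefactor :
    HasDerivAt (prefactor a k y z) ((y - z * (a + y ^ 2)) / 2) 0 := by
  have := ((((hasDerivAt_id' (0 : ℝ)).pow 2).const_mul (y * z / k)).add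
    ((hasDerivAt_id' (0 : ℝ)).const_mul ((y - z * (a + y ^ 2)) / 2))).add_const (k * y ^ 2 / 2)
  exact this.congr_deriv (by ring)

theorem hasDerivAt_numer :
    HasDerivAt (numer a b k y z) (b * y + z * (2 * z * (a + y ^ 2) - y * (2 + a + y ^ 2))) 0 := by
  have := (((hasDerivAt_id' (0 : ℝ)).mul_const b).mul_const y).add
    (((((hasDerivAt_id' (0 : ℝ)).const_mul 2).mul_const z).mul_const (a + y ^ 2)).sub
      ((((hasDerivAt_id' (0 : ℝ)).mul_const (2 + a + y ^ 2)).const_add (k * y)).const_mul y)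
      |>.const_mul z)
  exact this.congr_deriv (by ring)

theorem hasDerivAt_denom : HasDerivAt (denom a k y z) (k * y - k * z * (a + y ^ 2)) 0 := by
  have := (((hasDerivAt_id' (0 : ℝ)).const_add (k * y)).const_mul (k * y)).add
    (((hasDerivAt_id' (0 : ℝ)).mul_const z).mul
      ((((hasDerivAt_id' (0 : ℝ)).const_mul 2).mul_const y).sub_const (k * (a + y ^ 2))))
  exact this.congr_deriv (by ring)

theorem denom_zero : denom a k y z 0 = k ^ 2 * y ^ 2 := by
  simp only [denom]
  ring

theorem continuousAt_radicandCoeff (hk : k ≠ 0) (hy : y ≠ 0) :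
    ContinuousAt (radicandCoeff a b k y z) 0 := by
  have hD : denom a k y z 0 ^ 2 ≠ 0 := by rw [denom_zero]; positivity
  exact ((hasDerivAt_numer a b k y z).continuousAt.const_mul _).div
    ((hasDerivAt_denom a k y z).continuousAt.pow 2) hD

theorem neg_prefactor_mul_radicandCoeff_zero (hk : k ≠ 0) (hy : y ≠ 0) :
    -(prefactor a k y z 0 * radicandCoeff a b k y z 0) / 2 = y * z / k := by
  simp only [prefactor, radicandCoeff, numer, denom_zero]
  field_simp
  ring

theorem hasDerivAt_neg_prefactor_mul_radicandCoeff (hk : k ≠ 0) (hy : y ≠ 0) :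
    HasDerivAt (fun ε => -(prefactor a k y z ε * radicandCoeff a b k y z ε) / 2)
      ((z - b) / k ^ 2 + z * (a + y ^ 2) * (y - z) / (k ^ 2 * y)) 0 := by
  have hD : denom a k y z 0 ^ 2 ≠ 0 := by rw [denom_zero]; positivity
  have := ((hasDerivAt_prefactor a k y z).mul
    (((hasDerivAt_numer a b k y z).const_mul (4 * k * y)).div
      ((hasDerivAt_denom a k y z).pow 2) hD)).neg.div_const 2
  refine this.congr_deriv ?_
  simp only [Pi.div_apply, Pi.pow_apply, prefactor, numer, denom_zero]
  field_simp
  ring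

end SelkovCsp

theorem selkov_csp_taylor_expansion_general (a b k y z : ℝ)
    (hk : 0 < k) (hy : 0 < y) :
    Tendsto (fun ε : ℝ => SelkovCsp a b k y z ε) (𝓝[>] 0) (𝓝 (y * z / k)) ∧
    Tendsto (fun ε : ℝ => (SelkovCsp a b k y z ε - y * z / k) / ε) (𝓝[>] 0)
      (𝓝 ((z - b) / k ^ 2 + z * (a + y ^ 2) * (y - z) / (k ^ 2 * y))) := by
  have hslope : Tendsto (fun ε : ℝ => (SelkovCsp a b k y z ε - y * z / k) / ε) (𝓝[≠] 0)
      (𝓝 ((z - b) / k ^ 2 + z * (a + y ^ 2) * (y - z) / (k ^ 2 * y))) := by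
    have key := tendsto_sub_div_of_div_sq_mul_one_sub_sqrt
      (SelkovCsp.continuousAt_radicandCoeff a b k y z hk.ne' hy.ne')
      (SelkovCsp.hasDerivAt_neg_prefactor_mul_radicandCoeff a b k y z hk.ne' hy.ne')
    rw [SelkovCsp.neg_prefactor_mul_radicandCoeff_zero a b k y z hk.ne' hy.ne'] at key
    refine key.congr' (eventually_nhdsWithin_of_forall fun ε (hε : ε ≠ 0) => ?_)
    simp only [SelkovCsp.eq_prefactor_div_sq_mul a b k y z hk.ne' hε]
  exact ⟨(tendsto_of_tendsto_sub_div_nhdsNE hslope).mono_left (nhdsGT_le_nhdsNE 0),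
    hslope.mono_left (nhdsGT_le_nhdsNE 0)⟩

/-- As `ε → 0⁺`, the CSP one-iteration SIM approximation of the 3D Sel'kov system tends to
`h₀(y,z) = yz/k` and its first-order correction tends to `h₁(y,z)`. -/
theorem selkov_csp_taylor_expansion (a b k y z : ℝ)
    (ha : 0 < a) (hb : 0 < b) (hk : 0 < k) (hy : 0 < y) (hz : 0 < z) :
    Tendsto (fun ε : ℝ => SelkovCsp a b k y z ε) (𝓝[>] 0) (𝓝 (y * z / k)) ∧
    Tendsto (fun ε : ℝ => (SelkovCsp a b k y z ε - y * z / k) / ε) (𝓝[>] 0)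
      (𝓝 ((z - b) / k ^ 2 + z * (a + y ^ 2) * (y - z) / (k ^ 2 * y))) :=
  selkov_csp_taylor_expansion_general a b k y z hk hy
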